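/- arXiv:2002.06629 — 4 statements merged into one kernel-verified Lean document; each statement's English description precedes it below -/
import Mathlib

section
/- Under the hypotheses of the preceding lemma applied to a single element: if A is a local Noetherian ring with exactly one associated prime 𝔯, B a local Noetherian A-algebra, b ∈ B a non-zero-divisor non-unit such that B/(b) is A-flat and (𝔯B, b) is prime, then the ideal (b) is (𝔯B, b)-primary in B. -/
/-!
Every `s ∉ 𝔯` is a non-zero-divisor of `A`, hence of the flat `A`-module `M = B/(b)`, and `𝔯` is
nilpotent, so `rad (b) = 𝔭 := 𝔯B + (b)` and it remains to see that each `y ∉ 𝔭` acts injectively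
on `M`. It does on `M/𝔯M = B/𝔭`, a domain. Filtering by the powers of `𝔯` reduces injectivity to
elements killed by `𝔯`; by flatness these are sums `∑ kₜ mₜ` with `kₜ ∈ Ann 𝔯`. If every relation
among the `kₜ` has all its coefficients in `𝔯`, the equational criterion applied to
`∑ kₜ (y mₜ) = 0` puts every `y mₜ`, hence every `mₜ`, into `𝔯M`, so each term vanishes.
Otherwise some relation has a coefficient outside `𝔯`; multiplying by this regular element
rewrites the sum with one term fewer.
-/

open scoped nonZeroDivisors

namespace Module.Flat

variable {R M : Type*} [CommRing R] [AddCommGroup M] [Module R M] [Flat R M]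

theorem exists_sum_smul_eq_of_forall_smul_eq_zero {I : Ideal R} (hI : I.FG) {w : M}
    (hw : ∀ r ∈ I, r • w = 0) :
    ∃ (k : ℕ) (v : Fin k → R) (y : Fin k → M), (∀ j, v j ∈ I.annihilator) ∧
      w = ∑ j, v j • y j := by
  have : Module.Finite R I := .of_fg hI
  have hcomp : LinearMap.toSpanSingleton R M w ∘ₗ I.subtype = 0 := by
    ext ⟨r, hr⟩
    exact hw r hr
  obtain ⟨k, a, y, hxy, ha⟩ := exists_factorization_of_comp_eq_zero_of_free hcomp
  refine ⟨k, a 1, fun j => y (Finsupp.single j 1), fun j => ?_, ?_⟩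
  · refine Submodule.mem_annihilator.2 fun r hr => ?_
    have har : a r = r • a 1 := by rw [← map_smul, smul_eq_mul, mul_one]
    simpa [har, mul_comm] using congr($ha ⟨r, hr⟩ j)
  · calc w = y (a 1) := by simpa using congr($hxy 1)
      _ = ∑ j, a 1 j • y (Finsupp.single j 1) := by
        conv_lhs => rw [← (a 1).univ_sum_single]
        refine (map_sum y _ _).trans (Finset.sum_congr rfl fun j _ => ?_)
        rw [← Finsupp.smul_single_one, map_smul]

theorem sum_smul_eq_zero_of_apply_eq_zero {I : Ideal R} (hreg : ∀ s ∉ I, s ∈ R⁰)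
    {φ : M →ₗ[R] M} (hφ : (I • ⊤ : Submodule R M).comap φ ≤ I • ⊤) {p : ℕ} (k : Fin p → R)
    (hk : ∀ t, k t ∈ I.annihilator) (m : Fin p → M) (h : φ (∑ t, k t • m t) = 0) :
    ∑ t, k t • m t = 0 := by
  induction p with
  | zero => simp
  | succ p ih =>
    by_cases hind : ∀ c : Fin (p + 1) → R, ∑ t, c t * k t = 0 → ∀ t, c t ∈ I
    · refine Finset.sum_eq_zero fun t _ => ?_
      have hrel : ∑ t, k t • φ (m t) = 0 := by simpa using h
      obtain ⟨q, a, y, hy, ha⟩ := isTrivialRelation_of_sum_smul_eq_zero hrel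
      have hmt : m t ∈ I • (⊤ : Submodule R M) := hφ <| by
        rw [Submodule.mem_comap, show φ (m t) = _ from hy t]
        refine Submodule.sum_mem _ fun j _ => Submodule.smul_mem_smul ?_ trivial
        exact hind (a · j) (by simpa only [mul_comm] using ha j) t
      have := Submodule.smul_mem_smul (hk t) hmt
      rwa [← Submodule.mul_smul, Submodule.annihilator_mul, Submodule.bot_smul,
        Submodule.mem_bot] at this
    · push Not at hind
      obtain ⟨c, hc, t₀, ht₀⟩ := hind
      set m' : Fin p → M := fun i => c t₀ • m (t₀.succAbove i) - c (t₀.succAbove i) • m t₀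
      have hsum : c t₀ • ∑ t, k t • m t = ∑ i, k (t₀.succAbove i) • m' i := by
        have : ∑ t, k t • (c t₀ • m t - c t • m t₀) = c t₀ • ∑ t, k t • m t := by
          simp only [smul_sub, Finset.sum_sub_distrib, smul_smul, ← Finset.sum_smul, mul_comm (k _),
            hc, zero_smul, sub_zero, Finset.smul_sum]
        rw [← this, Fin.sum_univ_succAbove _ t₀, sub_self, smul_zero, zero_add]
      refine (isSMulRegular_of_nonZeroDivisors (hreg _ ht₀)).right_eq_zero_of_smul ?_
      rw [hsum]
      refine ih (fun i => k _) (fun i => hk _) m' ?_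
      rw [← hsum, map_smul, h, smul_zero]

theorem eq_zero_of_apply_eq_zero_of_forall_smul_eq_zero {I : Ideal R} (hreg : ∀ s ∉ I, s ∈ R⁰)
    {φ : M →ₗ[R] M} (hφ : (I • ⊤ : Submodule R M).comap φ ≤ I • ⊤) (hI : I.FG) {w : M}
    (hw : ∀ r ∈ I, r • w = 0) (h : φ w = 0) : w = 0 := by
  obtain ⟨k, v, y, hv, rfl⟩ := exists_sum_smul_eq_of_forall_smul_eq_zero hI hw
  exact sum_smul_eq_zero_of_apply_eq_zero hreg hφ v hv y h

theorem injective_of_comap_smul_top_le {I : Ideal R} (hreg : ∀ s ∉ I, s ∈ R⁰)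
    {φ : M →ₗ[R] M} (hφ : (I • ⊤ : Submodule R M).comap φ ≤ I • ⊤) (hI : I.FG)
    (hnil : IsNilpotent I) : Function.Injective φ := by
  obtain ⟨n, hn⟩ := hnil
  have key : ∀ j, ∀ w, φ w = 0 → (∀ a ∈ I ^ j, a • w = 0) → w = 0 := by
    intro j
    induction j with
    | zero => exact fun w _ hw => by simpa using hw 1 (by simp)
    | succ j ih =>
      refine fun w h hw => ih w h fun a ha => ?_
      refine eq_zero_of_apply_eq_zero_of_forall_smul_eq_zero hreg hφ hI (fun r hr => ?_)
        (by rw [map_smul, h, smul_zero])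
      rw [smul_smul]
      exact hw _ (pow_succ' I j ▸ Ideal.mul_mem_mul hr ha)
  refine (injective_iff_map_eq_zero φ).2 fun w h => key n w h fun a ha => ?_
  rw [hn, Ideal.zero_eq_bot, Ideal.mem_bot] at ha
  rw [ha, zero_smul]

end Module.Flat

section AssociatedPrimes

variable {R : Type*} [CommRing R] [IsNoetherianRing R] {𝔯 : Ideal R}

theorem le_nilradical_of_associatedPrimes_eq_singleton (h : associatedPrimes R R = {𝔯}) :
    𝔯 ≤ nilradical R := by
  have hmin : minimalPrimes R ⊆ {𝔯} := by
    rw [← h]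
    simpa [Module.annihilator_eq_bot.2 (inferInstance : FaithfulSMul R R)] using
      Module.associatedPrimes.minimalPrimes_annihilator_subset_associatedPrimes R R
  rw [nilradical, ← Ideal.sInf_minimalPrimes]
  exact le_sInf fun p hp => (hmin hp).ge

theorem notMem_iff_mem_nonZeroDivisors_of_associatedPrimes_eq_singleton
    (h : associatedPrimes R R = {𝔯}) {s : R} : s ∉ 𝔯 ↔ s ∈ R⁰ := by
  have := biUnion_associatedPrimes_eq_compl_nonZeroDivisors R
  simp only [h, Set.mem_singleton_iff, Set.iUnion_iUnion_eq_left] at this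
  rw [← SetLike.mem_coe, this, Set.notMem_compl_iff, SetLike.mem_coe]

end AssociatedPrimes

section FlatQuotient

variable {A B : Type*} [CommRing A] [CommRing B] [Algebra A B]

theorem Ideal.Quotient.mk_mem_smul_top_iff (𝔯 : Ideal A) (J : Ideal B) (w : B) :
    Ideal.Quotient.mk J w ∈ 𝔯 • (⊤ : Submodule A (B ⧸ J)) ↔ w ∈ 𝔯.map (algebraMap A B) ⊔ J := by
  rw [Ideal.smul_top_eq_map, Submodule.restrictScalars_mem, IsScalarTower.algebraMap_eq A B,
    ← Ideal.map_map, Ideal.Quotient.algebraMap_eq, Ideal.mem_quotient_iff_mem_sup]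

theorem Ideal.radical_eq_map_sup_of_le_nilradical {𝔯 : Ideal A} (h𝔯 : 𝔯 ≤ nilradical A)
    {J : Ideal B} (hprime : (𝔯.map (algebraMap A B) ⊔ J).IsPrime) :
    J.radical = 𝔯.map (algebraMap A B) ⊔ J := by
  refine le_antisymm (hprime.radical_le_iff.2 le_sup_right) (sup_le ?_ Ideal.le_radical)
  refine Ideal.map_le_iff_le_comap.2 fun a ha => ?_
  obtain ⟨n, hn⟩ := mem_nilradical.1 (h𝔯 ha)
  exact ⟨n, by simp [← map_pow, hn]⟩

variable [IsNoetherianRing A] {𝔯 : Ideal A} {J : Ideal B} [Module.Flat A (B ⧸ J)]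

theorem injective_mulLeft_mk_of_notMem (hA : associatedPrimes A A = {𝔯})
    (hprime : (𝔯.map (algebraMap A B) ⊔ J).IsPrime) {y : B}
    (hy : y ∉ 𝔯.map (algebraMap A B) ⊔ J) :
    Function.Injective (LinearMap.mulLeft A (Ideal.Quotient.mk J y)) := by
  refine Module.Flat.injective_of_comap_smul_top_le
    (fun _ => (notMem_iff_mem_nonZeroDivisors_of_associatedPrimes_eq_singleton hA).1)
    ?_ (IsNoetherian.noetherian 𝔯) ?_
  · intro v hv
    obtain ⟨w, rfl⟩ := Ideal.Quotient.mk_surjective v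
    rw [Submodule.mem_comap, LinearMap.mulLeft_apply, ← map_mul,
      Ideal.Quotient.mk_mem_smul_top_iff] at hv
    exact (Ideal.Quotient.mk_mem_smul_top_iff _ _ _).2 ((hprime.mem_or_mem hv).resolve_left hy)
  · exact (Ideal.FG.isNilpotent_iff_le_nilradical (IsNoetherian.noetherian 𝔯)).2
      (le_nilradical_of_associatedPrimes_eq_singleton hA)

theorem Ideal.isPrimary_of_flat_quotient (hA : associatedPrimes A A = {𝔯}) (hJ : J ≠ ⊤)
    (hprime : (𝔯.map (algebraMap A B) ⊔ J).IsPrime) : J.IsPrimary := by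
  refine Ideal.isPrimary_iff.2 ⟨hJ, fun {x y} hxy => or_iff_not_imp_right.2 fun hy => ?_⟩
  rw [Ideal.radical_eq_map_sup_of_le_nilradical
    (le_nilradical_of_associatedPrimes_eq_singleton hA) hprime] at hy
  rw [← Ideal.Quotient.eq_zero_iff_mem]
  refine injective_mulLeft_mk_of_notMem hA hprime hy ?_
  simp [← map_mul, Ideal.Quotient.eq_zero_iff_mem, mul_comm y, hxy]

end FlatQuotient

theorem stmt1_general {A B : Type*} [CommRing A] [CommRing B]
    [IsNoetherianRing A] [IsNoetherianRing B]
    [Algebra A B] (b : B)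
    (hnu : ¬ IsUnit b)
    (𝔯 : Ideal A) (hA : associatedPrimes A A = {𝔯})
    (hflat : Module.Flat A (B ⧸ Ideal.span {b}))
    (hprime : (𝔯.map (algebraMap A B) ⊔ Ideal.span {b}).IsPrime) :
    associatedPrimes B (B ⧸ Ideal.span {b}) = {𝔯.map (algebraMap A B) ⊔ Ideal.span {b}} := by
  have hb : Ideal.span {b} ≠ ⊤ := by rwa [Ne, Ideal.span_singleton_eq_top]
  rw [associatedPrimes.eq_singleton_of_isPrimary (Ideal.isPrimary_of_flat_quotient hA hb hprime),
    Ideal.radical_eq_map_sup_of_le_nilradical (le_nilradical_of_associatedPrimes_eq_singleton hA)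
      hprime]

/-- If `A` is a local Noetherian ring with exactly one associated prime `𝔯`, `B` a local
Noetherian `A`-algebra, and `b ∈ B` a non-zero-divisor non-unit such that `B/(b)` is `A`-flat
and `(𝔯B, b)` is prime, then `(b)` is `(𝔯B, b)`-primary, i.e. the set of associated primes of
`B/(b)` is exactly `{(𝔯B, b)}`. -/
theorem stmt1 {A B : Type*} [CommRing A] [CommRing B]
    [IsNoetherianRing A] [IsNoetherianRing B] [IsLocalRing A] [IsLocalRing B]
    [Algebra A B] (b : B)
    (hnzd : b ∈ nonZeroDivisors B) (hnu : ¬ IsUnit b)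
    (𝔯 : Ideal A) (hA : associatedPrimes A A = {𝔯})
    (hflat : Module.Flat A (B ⧸ Ideal.span {b}))
    (hprime : (𝔯.map (algebraMap A B) ⊔ Ideal.span {b}).IsPrime) :
    associatedPrimes B (B ⧸ Ideal.span {b}) = {𝔯.map (algebraMap A B) ⊔ Ideal.span {b}} :=
  stmt1_general b hnu 𝔯 hA hflat hprime
end

section
/- Let A be a local Noetherian ring with unique associated prime 𝔯, B a local Noetherian A-algebra, and b ∈ B a non-zero-divisor non-unit such that B/(b) is A-flat and 𝔭 = (𝔯B, b) is prime. Then 𝔭 has height exactly 1. -/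
/-! Minimal primes of a Noetherian ring are associated, so `𝔯` is the nilradical of `A`. Hence
`𝔯B` is nil and `𝔭` is a minimal prime over `(b)`: Krull's principal ideal theorem bounds its
height by `1`, and the non-zero-divisor `b` bounds the height of `(b)`, hence of `𝔭`, below by `1`. -/

open Ideal

theorem nilradical_eq_of_associatedPrimes_eq_singleton {A : Type*} [CommRing A]
    [IsNoetherianRing A] {𝔯 : Ideal A} (hA : associatedPrimes A A = {𝔯}) : nilradical A = 𝔯 := by
  have h𝔯 : 𝔯 ∈ associatedPrimes A A := hA ▸ Set.mem_singleton 𝔯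
  have := h𝔯.isPrime
  refine le_antisymm (nilradical_le_prime 𝔯) ?_
  rw [nilradical_eq_sInf]
  refine le_sInf fun p (hp : p.IsPrime) => ?_
  obtain ⟨q, hq, hqp⟩ := exists_minimalPrimes_le (bot_le : ⊥ ≤ p)
  have hq_ass : q ∈ associatedPrimes A A := by
    refine Module.associatedPrimes.minimalPrimes_annihilator_subset_associatedPrimes A A ?_
    rwa [Module.annihilator_eq_bot.mpr inferInstance]
  rw [hA, Set.mem_singleton_iff] at hq_ass
  exact hq_ass ▸ hqp

theorem Ideal.map_sup_mem_minimalPrimes_of_le_nilradical {A B : Type*} [CommRing A]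
    [CommRing B] (f : A →+* B) {I : Ideal A} (hI : I ≤ nilradical A) (J : Ideal B)
    (hprime : (I.map f ⊔ J).IsPrime) : I.map f ⊔ J ∈ J.minimalPrimes := by
  refine ⟨⟨hprime, le_sup_right⟩, fun q ⟨_, hJq⟩ _ => sup_le ?_ hJq⟩
  exact map_le_iff_le_comap.mpr (hI.trans (nilradical_le_prime _))

theorem stmt2_general {A B : Type*} [CommRing A] [CommRing B]
    [IsNoetherianRing A] [IsNoetherianRing B]
    [Algebra A B] (b : B)
    (hnzd : b ∈ nonZeroDivisors B)
    (𝔯 : Ideal A) (hA : associatedPrimes A A = {𝔯})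
    (hprime : (𝔯.map (algebraMap A B) ⊔ Ideal.span {b}).IsPrime) :
    Order.height (⟨𝔯.map (algebraMap A B) ⊔ Ideal.span {b}, hprime⟩ : PrimeSpectrum B) = 1 := by
  have hmin := map_sup_mem_minimalPrimes_of_le_nilradical (algebraMap A B)
    (nilradical_eq_of_associatedPrimes_eq_singleton hA).ge (span {b}) hprime
  rw [← PrimeSpectrum.height_eq_orderHeight]
  exact le_antisymm (height_le_one_of_isPrincipal_of_mem_minimalPrimes _ _ hmin)
    ((one_le_height_span_singleton_of_mem_nonZeroDivisors hnzd).trans (height_mono hmin.1.2))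

/-- Under the same hypotheses, the prime `𝔭 = (𝔯B, b)` has height exactly `1`
(height of a prime ideal = its height as a point of the prime spectrum). -/
theorem stmt2 {A B : Type*} [CommRing A] [CommRing B]
    [IsNoetherianRing A] [IsNoetherianRing B] [IsLocalRing A] [IsLocalRing B]
    [Algebra A B] (b : B)
    (hnzd : b ∈ nonZeroDivisors B) (hnu : ¬ IsUnit b)
    (𝔯 : Ideal A) (hA : associatedPrimes A A = {𝔯})
    (hflat : Module.Flat A (B ⧸ Ideal.span {b}))
    (hprime : (𝔯.map (algebraMap A B) ⊔ Ideal.span {b}).IsPrime) :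
    Order.height (⟨𝔯.map (algebraMap A B) ⊔ Ideal.span {b}, hprime⟩ : PrimeSpectrum B) = 1 :=
  stmt2_general b hnzd 𝔯 hA hprime
end

section
/- Let Λ be a local finite-dimensional ℂ-algebra with maximal ideal 𝔪, E a finite Λ-module, φ : E → E a Λ-linear endomorphism, and φ̄ : E/𝔪E → E/𝔪E the induced ℂ-linear endomorphism. Then the set of eigenvalues of φ (as a ℂ-linear endomorphism of E) equals the set of eigenvalues of φ̄. -/
/-!
`ρ` is an eigenvalue of `φ` iff `φ - ρ` is not surjective, as `E` is finite-dimensional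
over `ℂ`; by Nakayama's lemma `φ - ρ` is surjective iff its reduction `φ̄ - ρ` modulo `𝔪` is.
-/

open IsLocalRing Module

theorem LinearMap.surjective_iff_surjective_of_comp_mkQ {R M N : Type*} [CommRing R]
    [IsLocalRing R] [AddCommGroup M] [Module R M] [AddCommGroup N] [Module R N]
    [Module.Finite R N] (ψ : M →ₗ[R] N)
    (ψbar : (M ⧸ (maximalIdeal R • ⊤ : Submodule R M)) →ₗ[R]
      (N ⧸ (maximalIdeal R • ⊤ : Submodule R N)))
    (h : ψbar ∘ₗ Submodule.mkQ _ = Submodule.mkQ _ ∘ₗ ψ) :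
    Function.Surjective ψ ↔ Function.Surjective ψbar := by
  rw [← range_eq_top, ← range_eq_top (f := ψbar), ← map_mkQ_eq_top, ← range_comp, ← h,
    range_comp_of_range_eq_top _ (Submodule.range_mkQ _)]

theorem Module.End.hasEigenvalue_restrictScalars_iff_not_surjective {K R M : Type*} [Field K]
    [CommRing R] [Algebra K R] [AddCommGroup M] [Module R M] [Module K M]
    [IsScalarTower K R M] [FiniteDimensional K M] (f : M →ₗ[R] M) (a : K) :
    HasEigenvalue (f.restrictScalars K) a ↔
      ¬ Function.Surjective (f - algebraMap K R a • (LinearMap.id : M →ₗ[R] M)) := by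
  have hshift : (f.restrictScalars K - a • 1 : End K M) =
      (f - algebraMap K R a • LinearMap.id).restrictScalars K := by
    ext x
    simp
  rw [hasEigenvalue_iff, eigenspace_def, hshift, Ne, LinearMap.ker_eq_bot,
    LinearMap.injective_iff_surjective, LinearMap.coe_restrictScalars]

/-- The spectrum (set of `ℂ`-eigenvalues) of a `Λ`-linear endomorphism `φ` of a finite
`Λ`-module `E` equals the spectrum of the induced endomorphism `φ̄` of `E/𝔪E`. -/
theorem stmt4 {Λ E : Type*} [CommRing Λ] [Algebra ℂ Λ] [IsLocalRing Λ]
    [FiniteDimensional ℂ Λ] [AddCommGroup E] [Module Λ E] [Module ℂ E]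
    [IsScalarTower ℂ Λ E] [Module.Finite Λ E]
    (φ : E →ₗ[Λ] E)
    (φbar : (E ⧸ (IsLocalRing.maximalIdeal Λ • ⊤ : Submodule Λ E)) →ₗ[Λ]
      (E ⧸ (IsLocalRing.maximalIdeal Λ • ⊤ : Submodule Λ E)))
    (hbar : ∀ x : E, φbar (Submodule.Quotient.mk x) = Submodule.Quotient.mk (φ x)) :
    {ρ : ℂ | Module.End.HasEigenvalue (φ.restrictScalars ℂ) ρ} =
      {ρ : ℂ | Module.End.HasEigenvalue (φbar.restrictScalars ℂ) ρ} := by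
  have : Module.Finite ℂ E := .trans Λ E
  have : Module.Finite ℂ (E ⧸ (maximalIdeal Λ • ⊤ : Submodule Λ E)) := .trans Λ _
  have hcomm : φbar ∘ₗ Submodule.mkQ _ = Submodule.mkQ _ ∘ₗ φ := LinearMap.ext hbar
  ext ρ
  have hshift : (φbar - algebraMap ℂ Λ ρ • LinearMap.id) ∘ₗ Submodule.mkQ _ =
      Submodule.mkQ _ ∘ₗ (φ - algebraMap ℂ Λ ρ • LinearMap.id) := by
    rw [LinearMap.sub_comp, LinearMap.comp_sub, hcomm, LinearMap.smul_comp,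
      LinearMap.comp_smul, LinearMap.id_comp, LinearMap.comp_id]
  rw [Set.mem_ofPred_eq, Set.mem_ofPred_eq,
    End.hasEigenvalue_restrictScalars_iff_not_surjective,
    End.hasEigenvalue_restrictScalars_iff_not_surjective,
    LinearMap.surjective_iff_surjective_of_comp_mkQ _ _ hshift]
end

section
/- Let V be a finite-dimensional complex vector space and let X, X' be endomorphisms of V such that every eigenvalue of X and of X' lies in a fixed set τ ⊂ ℂ containing exactly one representative of each coset of ℤ in (ℂ, +). If exp(2πi·X) = exp(2πi·X'), then X = X'. -/
open Finset NormedSpace Set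

/-- Truncated exponential sums determine nilpotent elements. -/
lemma nilpotent_expPoly_inj {R : Type*} [Ring R] [Algebra ℂ R] {b b' : R} {K : ℕ}
    (hb : b ^ K = 0) (hb' : b' ^ K = 0)
    (h : ∑ k ∈ range K, ((k.factorial : ℂ))⁻¹ • b ^ k
       = ∑ k ∈ range K, ((k.factorial : ℂ))⁻¹ • b' ^ k) : b = b' := by
  rcases Nat.eq_zero_or_pos K with hK | hK
  · subst hK
    simp only [pow_zero] at hb
    have : Subsingleton R := subsingleton_of_zero_eq_one hb.symm
    exact Subsingleton.elim _ _
  set D := b - b' with hD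
  set S : ℕ → Submodule ℂ R := fun m =>
    Submodule.span ℂ {x | ∃ i j : ℕ, m ≤ i + j ∧ x = b ^ i * D * b' ^ j} with hS
  have S_anti : ∀ {m m' : ℕ}, m ≤ m' → S m' ≤ S m := by
    intro m m' hmm
    apply Submodule.span_mono
    rintro x ⟨i, j, hij, rfl⟩
    exact ⟨i, j, le_trans hmm hij, rfl⟩
  have mulmem : ∀ (m i j : ℕ) (x : R), x ∈ S m → b ^ i * x * b' ^ j ∈ S (m + i + j) := by
    intro m i j x hx
    induction hx using Submodule.span_induction with
    | mem x hx =>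
      obtain ⟨p, q, hpq, rfl⟩ := hx
      refine Submodule.subset_span ⟨i + p, q + j, by omega, ?_⟩
      simp [pow_add, mul_assoc]
    | zero => simp
    | add x y _ _ hx hy =>
      rw [mul_add, add_mul]; exact add_mem hx hy
    | smul c x _ hx =>
      rw [mul_smul_comm, smul_mul_assoc]; exact Submodule.smul_mem _ _ hx
  have powsub : ∀ k : ℕ, b ^ (k + 1) - b' ^ (k + 1) ∈ S k := by
    intro k
    induction k with
    | zero =>
      have h0 : b ^ (0 + 1) - b' ^ (0 + 1) = b ^ 0 * D * b' ^ 0 := by simp [hD]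
      rw [h0]
      exact Submodule.subset_span ⟨0, 0, le_refl 0, rfl⟩
    | succ k ih =>
      have hid : b ^ (k + 1 + 1) - b' ^ (k + 1 + 1)
          = b * (b ^ (k + 1) - b' ^ (k + 1)) + D * b' ^ (k + 1) := by
        rw [hD, mul_sub, sub_mul, ← pow_succ' b (k + 1), ← pow_succ' b' (k + 1)]
        exact (sub_add_sub_cancel _ _ _).symm
      rw [hid]
      refine add_mem ?_ ?_
      · have := mulmem k 1 0 _ ih
        simpa using this
      · exact Submodule.subset_span ⟨0, k + 1, by omega, by simp⟩
  have hzero : D + ∑ k ∈ Ico 2 K, ((k.factorial : ℂ))⁻¹ • (b ^ k - b' ^ k) = 0 := by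
    have hz : ∑ k ∈ range K, ((k.factorial : ℂ))⁻¹ • (b ^ k - b' ^ k) = 0 := by
      simp only [smul_sub, Finset.sum_sub_distrib, h, sub_self]
    rcases Nat.lt_or_ge K 2 with hK2 | hK2
    · have hK1 : K = 1 := by omega
      subst hK1
      have hb0 : b = 0 := by simpa using hb
      have hb'0 : b' = 0 := by simpa using hb'
      simp [hD, hb0, hb'0]
    · have hsplit : ∑ k ∈ range K, ((k.factorial : ℂ))⁻¹ • (b ^ k - b' ^ k)
          = (∑ k ∈ range 2, ((k.factorial : ℂ))⁻¹ • (b ^ k - b' ^ k))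
            + ∑ k ∈ Ico 2 K, ((k.factorial : ℂ))⁻¹ • (b ^ k - b' ^ k) := by
        rw [range_eq_Ico]
        exact (Finset.sum_Ico_consecutive _ (Nat.zero_le 2) hK2).symm
      have h2 : ∑ k ∈ range 2, ((k.factorial : ℂ))⁻¹ • (b ^ k - b' ^ k) = D := by
        simp [Finset.sum_range_succ, hD]
      rw [hsplit, h2] at hz
      exact hz
  have hDeq : D = -∑ k ∈ Ico 2 K, ((k.factorial : ℂ))⁻¹ • (b ^ k - b' ^ k) :=
    eq_neg_of_add_eq_zero_left hzero
  have Sstep : ∀ m, S m ≤ S (m + 1) := by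
    intro m
    conv_lhs => rw [hS]
    apply Submodule.span_le.2
    rintro x ⟨i, j, hij, rfl⟩
    have hrw : b ^ i * D * b' ^ j
        = -∑ k ∈ Ico 2 K, ((k.factorial : ℂ))⁻¹ • (b ^ i * (b ^ k - b' ^ k) * b' ^ j) := by
      conv_lhs => rw [hDeq]
      rw [mul_neg, neg_mul, Finset.mul_sum, Finset.sum_mul]
      congr 1
      refine Finset.sum_congr rfl fun k _ => ?_
      rw [mul_smul_comm, smul_mul_assoc]
    show b ^ i * D * b' ^ j ∈ S (m + 1)
    rw [hrw]
    refine neg_mem (Submodule.sum_mem _ fun k hk => ?_)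
    rw [Finset.mem_Ico] at hk
    refine Submodule.smul_mem _ _ ?_
    have h1 : b ^ k - b' ^ k ∈ S (k - 1) := by
      have := powsub (k - 1)
      have hk1 : k - 1 + 1 = k := by omega
      rwa [hk1] at this
    have h2 := mulmem (k - 1) i j _ h1
    have h3 : b ^ i * (b ^ k - b' ^ k) * b' ^ j ∈ S (k - 1 + i + j) := h2
    exact S_anti (by omega) h3
  have hDall : ∀ m, D ∈ S m := by
    intro m
    induction m with
    | zero => exact Submodule.subset_span ⟨0, 0, le_refl 0, by simp⟩
    | succ m ih => exact Sstep m ih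
  have hfin : S (K + K) ≤ ⊥ := by
    conv_lhs => rw [hS]
    apply Submodule.span_le.2
    rintro x ⟨i, j, hij, rfl⟩
    have : K ≤ i ∨ K ≤ j := by omega
    rcases this with hi | hj
    · simp [Submodule.mem_bot, pow_eq_zero_of_le hi hb]
    · simp [Submodule.mem_bot, pow_eq_zero_of_le hj hb']
  have hD0 : D = 0 := by
    have := hfin (hDall (K + K))
    simpa using this
  exact sub_eq_zero.1 hD0

/-- In a Banach `ℂ`-algebra the exponential is a truncated sum plus a tail divisible by
`x ^ K`. -/
lemma exp_eq_truncated_add_tail {A : Type*} [NormedRing A] [NormedAlgebra ℂ A]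
    [CompleteSpace A] (x : A) (K : ℕ) :
    ∃ C : A, Commute x C ∧
      exp x = (∑ k ∈ range K, ((k.factorial : ℂ))⁻¹ • x ^ k) + C * x ^ K := by
  have hsum0 : Summable fun n : ℕ => ((n.factorial : ℂ))⁻¹ • x ^ n :=
    NormedSpace.expSeries_summable' (𝕂 := ℂ) x
  have hsum : Summable fun n : ℕ => (((n + K).factorial : ℂ))⁻¹ • x ^ n := by
    refine Summable.of_norm_bounded (NormedSpace.norm_expSeries_summable' (𝕂 := ℂ) x) ?_
    intro n
    have hfac : ((n.factorial : ℝ)) ≤ (((n + K).factorial : ℝ)) := by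
      exact_mod_cast Nat.factorial_le (Nat.le_add_right n K)
    have hpos : (0:ℝ) < ((n.factorial : ℝ)) := by exact_mod_cast n.factorial_pos
    rw [norm_smul, norm_smul, norm_inv, norm_inv, Complex.norm_natCast, Complex.norm_natCast]
    have : (((n + K).factorial : ℝ))⁻¹ ≤ ((n.factorial : ℝ))⁻¹ :=
      inv_anti₀ hpos hfac
    exact mul_le_mul_of_nonneg_right this (norm_nonneg _)
  refine ⟨∑' n : ℕ, (((n + K).factorial : ℂ))⁻¹ • x ^ n, ?_, ?_⟩
  · exact Commute.tsum_right x fun n => ((Commute.refl x).pow_right n).smul_right _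
  · simp only [NormedSpace.exp_eq_tsum ℂ]
    rw [← Summable.sum_add_tsum_nat_add K hsum0]
    congr 1
    rw [← Summable.tsum_mul_right (x ^ K) hsum]
    refine tsum_congr fun n => ?_
    rw [pow_add, smul_mul_assoc]

/-- Exponential of a complex matrix, recentered at `ρ`. -/
lemma matrix_exp_decomp {d : ℕ} (M : Matrix (Fin d) (Fin d) ℂ) (ρ : ℂ) (K : ℕ) :
    ∃ C : Matrix (Fin d) (Fin d) ℂ,
      exp M = Complex.exp ρ •
        ((∑ k ∈ range K, ((k.factorial : ℂ))⁻¹ • (M - algebraMap ℂ _ ρ) ^ k)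
          + C * (M - algebraMap ℂ _ ρ) ^ K) := by
  letI : SeminormedRing (Matrix (Fin d) (Fin d) ℂ) := Matrix.linftyOpSemiNormedRing
  letI : NormedRing (Matrix (Fin d) (Fin d) ℂ) := Matrix.linftyOpNormedRing
  letI : NormedAlgebra ℂ (Matrix (Fin d) (Fin d) ℂ) := Matrix.linftyOpNormedAlgebra
  set B := M - algebraMap ℂ (Matrix (Fin d) (Fin d) ℂ) ρ with hB
  obtain ⟨C, -, hC⟩ := exp_eq_truncated_add_tail B K
  refine ⟨C, ?_⟩
  have h1 : M = algebraMap ℂ (Matrix (Fin d) (Fin d) ℂ) ρ + B := by rw [hB, add_sub_cancel]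
  have hcomm : Commute (algebraMap ℂ (Matrix (Fin d) (Fin d) ℂ) ρ) B :=
    Algebra.commutes ρ B
  calc exp M = exp (algebraMap ℂ (Matrix (Fin d) (Fin d) ℂ) ρ + B) := by rw [← h1]
    _ = exp (algebraMap ℂ (Matrix (Fin d) (Fin d) ℂ) ρ) * exp B :=
        Matrix.exp_add_of_commute _ _ hcomm
    _ = algebraMap ℂ (Matrix (Fin d) (Fin d) ℂ) (exp ρ) * exp B := by
        rw [algebraMap_exp_comm]; rfl
    _ = Complex.exp ρ • exp B := by
        rw [← Algebra.smul_def, Complex.exp_eq_exp_ℂ]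
    _ = _ := by exact congrArg (Complex.exp ρ • ·) hC

/-- The exponential of an endomorphism of a finite-dimensional complex vector space,
computed via the matrix exponential in a chosen basis. -/
noncomputable def endExp {V : Type*} [AddCommGroup V] [Module ℂ V] [FiniteDimensional ℂ V]
    (f : V →ₗ[ℂ] V) : V →ₗ[ℂ] V :=
  Matrix.toLin (Module.finBasis ℂ V) (Module.finBasis ℂ V)
    (NormedSpace.exp (LinearMap.toMatrix (Module.finBasis ℂ V) (Module.finBasis ℂ V) f))

lemma endExp_apply_maxGenEigenspace {V : Type*} [AddCommGroup V] [Module ℂ V]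
    [FiniteDimensional ℂ V] (c : ℂ) (Y : V →ₗ[ℂ] V) (ρ : ℂ) (u : V)
    (hu : u ∈ Module.End.maxGenEigenspace Y ρ) :
    endExp (c • Y) u = Complex.exp (c * ρ) •
      ((∑ k ∈ Finset.range (Module.finrank ℂ V),
        ((k.factorial : ℂ))⁻¹ • (c • (Y - ρ • 1)) ^ k) u) := by
  classical
  set ψ := Matrix.toLinAlgEquiv (Module.finBasis ℂ V) with hψ
  have hψ1 : ∀ A : Matrix (Fin (Module.finrank ℂ V)) (Fin (Module.finrank ℂ V)) ℂ, ψ A = Matrix.toLin (Module.finBasis ℂ V) (Module.finBasis ℂ V) A := by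
    intro A
    ext v
    rw [hψ, Matrix.toLinAlgEquiv_apply, Matrix.toLin_apply]
  have hψ2 : ∀ f : V →ₗ[ℂ] V, ψ.symm f = LinearMap.toMatrix (Module.finBasis ℂ V) (Module.finBasis ℂ V) f := by
    intro f
    ext i j
    rw [hψ, Matrix.toLinAlgEquiv_symm, LinearMap.toMatrixAlgEquiv_apply,
      LinearMap.toMatrix_apply]
  have hend : ∀ f : V →ₗ[ℂ] V, endExp f = ψ (NormedSpace.exp (ψ.symm f)) := by
    intro f
    unfold endExp
    rw [hψ1, hψ2]
  obtain ⟨C, hC⟩ := matrix_exp_decomp (ψ.symm (c • Y)) (c * ρ) (Module.finrank ℂ V)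
  set B := ψ.symm (c • Y) - algebraMap ℂ (Matrix (Fin (Module.finrank ℂ V)) (Fin (Module.finrank ℂ V)) ℂ) (c * ρ) with hBdef
  have hBψ : ψ B = c • (Y - ρ • 1) := by
    rw [hBdef, map_sub, AlgEquiv.apply_symm_apply, AlgEquiv.commutes,
      Algebra.algebraMap_eq_smul_one, smul_sub, mul_smul]
  clear_value B
  have hj : endExp (c • Y) = Complex.exp (c * ρ) •
      ((∑ k ∈ Finset.range (Module.finrank ℂ V), ((k.factorial : ℂ))⁻¹ • (c • (Y - ρ • 1)) ^ k)
        + ψ C * (c • (Y - ρ • 1)) ^ (Module.finrank ℂ V)) := by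
    rw [hend, hC]
    simp only [map_smul, map_add, map_sum, map_pow, map_mul, hBψ]
  rw [hj]
  have hnil : ((c • (Y - ρ • 1)) ^ (Module.finrank ℂ V)) u = 0 := by
    rw [smul_pow]
    have h0 : ((Y - ρ • 1) ^ (Module.finrank ℂ V)) u = 0 := by
      rw [Module.End.maxGenEigenspace_eq_genEigenspace_finrank,
        Module.End.mem_genEigenspace_nat, LinearMap.mem_ker] at hu
      exact hu
    rw [LinearMap.smul_apply, h0, smul_zero]
  simp only [LinearMap.smul_apply, LinearMap.add_apply, Module.End.mul_apply, hnil, map_zero,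
    add_zero]

/-- If `X`, `X'` are endomorphisms of a finite-dimensional complex vector space all of whose
eigenvalues lie in a set `τ` of coset representatives for `ℂ/ℤ`, and
`exp (2πi X) = exp (2πi X')`, then `X = X'`. -/
theorem stmt5 {V : Type*} [AddCommGroup V] [Module ℂ V] [FiniteDimensional ℂ V]
    (τ : Set ℂ) (hτ : ∀ z : ℂ, ∃! w, w ∈ τ ∧ ∃ n : ℤ, z - w = (n : ℂ))
    (X X' : V →ₗ[ℂ] V)
    (hX : ∀ ρ : ℂ, Module.End.HasEigenvalue X ρ → ρ ∈ τ)
    (hX' : ∀ ρ : ℂ, Module.End.HasEigenvalue X' ρ → ρ ∈ τ)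
    (h : endExp ((2 * Real.pi * Complex.I : ℂ) • X) =
      endExp ((2 * Real.pi * Complex.I : ℂ) • X')) :
    X = X' := by
  classical
  rcases subsingleton_or_nontrivial V with hV | hV
  · exact LinearMap.ext fun v => Subsingleton.elim _ _
  set c : ℂ := (2 * Real.pi * Complex.I : ℂ) with hc
  have hπ : (Real.pi : ℂ) ≠ 0 := by exact_mod_cast Real.pi_ne_zero
  have hcne : c ≠ 0 := by
    rw [hc]; exact mul_ne_zero (mul_ne_zero two_ne_zero hπ) Complex.I_ne_zero
  set d := Module.finrank ℂ V with hd
  have hd0 : 0 < d := Module.finrank_pos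
  set g := endExp (c • X) with hg
  have hgX : endExp (c • X) = g := hg.symm
  have hgX' : endExp (c • X') = g := h.symm.trans hg.symm
  -- injectivity of ρ ↦ exp (c ρ) on τ
  have hτinj : ∀ ρ ρ', ρ ∈ τ → ρ' ∈ τ → Complex.exp (c * ρ) = Complex.exp (c * ρ') →
      ρ = ρ' := by
    intro ρ ρ' hρ hρ' heq
    rw [Complex.exp_eq_exp_iff_exists_int] at heq
    obtain ⟨n, hn⟩ := heq
    have hsub : ρ - ρ' = (n : ℂ) := by
      have h1 : c * (ρ - ρ' - n) = 0 := by rw [hc] at hn ⊢; linear_combination hn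
      rcases mul_eq_zero.mp h1 with h2 | h2
      · exact absurd h2 hcne
      · linear_combination h2
    obtain ⟨w, -, huniq⟩ := hτ ρ
    have h1 : ρ' = w := huniq ρ' ⟨hρ', ⟨n, hsub⟩⟩
    have h2 : ρ = w := huniq ρ ⟨hρ, ⟨0, by simp⟩⟩
    rw [h2, h1]
  -- each generalized eigenspace is contained in one of `g`
  have hsub : ∀ Y : V →ₗ[ℂ] V, endExp (c • Y) = g → ∀ ρ : ℂ,
      Module.End.maxGenEigenspace Y ρ ≤
        Module.End.maxGenEigenspace g (Complex.exp (c * ρ)) := by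
    intro Y hY ρ u hu
    set μ := Complex.exp (c * ρ) with hμ
    set w : V →ₗ[ℂ] V := c • (Y - ρ • 1) with hw
    set T : V →ₗ[ℂ] V := ∑ k ∈ Finset.range d, ((k.factorial : ℂ))⁻¹ • w ^ k with hT
    have hgu : ∀ v ∈ Module.End.maxGenEigenspace Y ρ, g v = μ • (T v) := fun v hv => by
      rw [← hY]; exact endExp_apply_maxGenEigenspace c Y ρ v hv
    have hcw : Commute Y w := by
      rw [hw]
      exact (((Commute.refl Y).sub_right ((Commute.one_right Y).smul_right ρ))).smul_right c
    have hcT : Commute Y (T - 1) := by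
      rw [hT]
      exact (Commute.sum_right _ _ _ fun k _ => (hcw.pow_right k).smul_right _).sub_right
        (Commute.one_right Y)
    have hmapsT : MapsTo ⇑(T - 1) ↑(Module.End.maxGenEigenspace Y ρ)
        ↑(Module.End.maxGenEigenspace Y ρ) :=
      Module.End.mapsTo_maxGenEigenspace_of_comm hcT ρ
    obtain ⟨e, hde⟩ : ∃ e, d = e + 1 := ⟨d - 1, by omega⟩
    have hTsum : T = (∑ j ∈ Finset.range e, (((j+1).factorial : ℂ))⁻¹ • w ^ (j+1)) + 1 := by
      rw [hT, hde, Finset.sum_range_succ']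
      simp
    have hfact : T - 1 = (∑ j ∈ Finset.range e, (((j+1).factorial : ℂ))⁻¹ • w ^ j) * w := by
      rw [hTsum, add_sub_cancel_right, Finset.sum_mul]
      refine Finset.sum_congr rfl fun j _ => ?_
      rw [smul_mul_assoc, ← pow_succ]
    set q : V →ₗ[ℂ] V := ∑ j ∈ Finset.range e, (((j+1).factorial : ℂ))⁻¹ • w ^ j with hq
    have hcqw : Commute q w := by
      rw [hq]
      exact Commute.sum_left _ _ _ fun j _ => ((Commute.refl w).pow_left j).smul_left _
    have hT1pow : (T - 1) ^ d = q ^ d * w ^ d := by rw [hfact, hcqw.mul_pow]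
    have hwd : ∀ v ∈ Module.End.maxGenEigenspace Y ρ, (w ^ d) v = 0 := by
      intro v hv
      rw [Module.End.maxGenEigenspace_eq_genEigenspace_finrank,
        Module.End.mem_genEigenspace_nat, LinearMap.mem_ker] at hv
      rw [hw, smul_pow, LinearMap.smul_apply, hd, hv, smul_zero]
    have hT1nil : ∀ v ∈ Module.End.maxGenEigenspace Y ρ, (((T - 1) ^ d)) v = 0 := by
      intro v hv
      rw [hT1pow, Module.End.mul_apply, hwd v hv, map_zero]
    have hpow : ∀ m : ℕ, ∀ v ∈ Module.End.maxGenEigenspace Y ρ,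
        ((g - μ • 1) ^ m) v = μ ^ m • (((T - 1) ^ m) v) := by
      intro m
      induction m with
      | zero => intro v hv; simp
      | succ m ih =>
        intro v hv
        have h1 : (g - μ • 1) v = μ • ((T - 1) v) := by
          rw [LinearMap.sub_apply, LinearMap.smul_apply, Module.End.one_apply, hgu v hv,
            LinearMap.sub_apply, Module.End.one_apply, smul_sub]
        have h2 : ((g - μ • 1) ^ (m + 1)) v = ((g - μ • 1) ^ m) ((g - μ • 1) v) := by
          rw [pow_succ, Module.End.mul_apply]
        have h3 : ((T - 1) ^ (m + 1)) v = ((T - 1) ^ m) ((T - 1) v) := by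
          rw [pow_succ, Module.End.mul_apply]
        rw [h2, h1, map_smul, ih _ (hmapsT hv), h3, smul_smul, ← pow_succ']
    rw [Module.End.mem_maxGenEigenspace]
    exact ⟨d, by rw [hpow d u hu, hT1nil u hu, smul_zero]⟩
  -- nontrivial spaces give eigenvalues in τ
  have hev : ∀ Y : V →ₗ[ℂ] V, (∀ ρ : ℂ, Module.End.HasEigenvalue Y ρ → ρ ∈ τ) →
      ∀ ρ : ℂ, ∀ v ∈ Module.End.maxGenEigenspace Y ρ, v ≠ 0 → ρ ∈ τ := by
    intro Y hY ρ v hv hv0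
    refine hY ρ (Module.End.hasEigenvalue_of_hasGenEigenvalue (k := d) ?_)
    rw [Module.End.maxGenEigenspace_eq_genEigenspace_finrank, ← hd] at hv
    exact Submodule.ne_bot_iff _ |>.mpr ⟨v, hv, hv0⟩
  have hind := Module.End.independent_maxGenEigenspace g
  -- matching of generalized eigenspaces
  have hmatch : ∀ Y Y' : V →ₗ[ℂ] V, endExp (c • Y) = g → endExp (c • Y') = g →
      (∀ ρ : ℂ, Module.End.HasEigenvalue Y ρ → ρ ∈ τ) →
      (∀ ρ : ℂ, Module.End.HasEigenvalue Y' ρ → ρ ∈ τ) →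
      ∀ ρ : ℂ, Module.End.maxGenEigenspace Y ρ ≤ Module.End.maxGenEigenspace Y' ρ := by
    intro Y Y' hY hY' hYτ hY'τ ρ x hx
    by_cases hx0 : x = 0
    · rw [hx0]; exact zero_mem _
    have hρτ : ρ ∈ τ := hev Y hYτ ρ x hx hx0
    set μ := Complex.exp (c * ρ) with hμ
    have hxL : x ∈ Module.End.maxGenEigenspace g μ := hsub Y hY ρ hx
    have hxtop : x ∈ ⨆ ρ' : ℂ, Module.End.maxGenEigenspace Y' ρ' := by
      rw [Module.End.iSup_maxGenEigenspace_eq_top]; trivial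
    have hsup : (⨆ ρ' : ℂ, Module.End.maxGenEigenspace Y' ρ') ≤
        Module.End.maxGenEigenspace Y' ρ ⊔
          (⨆ (ν : ℂ) (_ : ν ≠ μ), Module.End.maxGenEigenspace g ν) := by
      refine iSup_le fun ρ' => ?_
      by_cases hρ' : ρ' = ρ
      · rw [hρ']; exact le_sup_left
      by_cases hbot : Module.End.maxGenEigenspace Y' ρ' = ⊥
      · rw [hbot]; exact bot_le
      obtain ⟨v, hv, hv0⟩ := Submodule.ne_bot_iff _ |>.mp hbot
      have hρ'τ : ρ' ∈ τ := hev Y' hY'τ ρ' v hv hv0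
      have hne : Complex.exp (c * ρ') ≠ μ := fun e => hρ' (hτinj ρ' ρ hρ'τ hρτ e)
      refine le_sup_of_le_right (le_trans (hsub Y' hY' ρ') ?_)
      exact le_iSup₂_of_le (Complex.exp (c * ρ')) hne le_rfl
    obtain ⟨y, hy, z, hz, hxyz⟩ := Submodule.mem_sup.mp (hsup hxtop)
    have hyL : y ∈ Module.End.maxGenEigenspace g μ := hsub Y' hY' ρ hy
    have hzL : z ∈ Module.End.maxGenEigenspace g μ := by
      have hzxy : z = x - y := by rw [← hxyz]; abel
      rw [hzxy]; exact sub_mem hxL hyL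
    have hz0 : z = 0 := by
      have hdisj := hind μ
      rw [Submodule.disjoint_def] at hdisj
      exact hdisj z hzL hz
    rw [← hxyz, hz0, add_zero]
    exact hy
  -- agreement on each generalized eigenspace of X
  have hagree : ∀ ρ : ℂ, ∀ u ∈ Module.End.maxGenEigenspace X ρ, X u = X' u := by
    intro ρ u hu
    have hUeq : Module.End.maxGenEigenspace X ρ = Module.End.maxGenEigenspace X' ρ :=
      le_antisymm (hmatch X X' hgX hgX' hX hX' ρ) (hmatch X' X hgX' hgX hX' hX ρ)
    set U := Module.End.maxGenEigenspace X ρ with hU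
    set μ := Complex.exp (c * ρ) with hμ
    have hμ0 : μ ≠ 0 := Complex.exp_ne_zero _
    have hmX : MapsTo ⇑(c • (X - ρ • 1)) ↑U ↑U := by
      refine Module.End.mapsTo_maxGenEigenspace_of_comm ?_ ρ
      exact ((Commute.refl X).sub_right ((Commute.one_right X).smul_right ρ)).smul_right c
    have hmX' : MapsTo ⇑(c • (X' - ρ • 1)) ↑U ↑U := by
      rw [hUeq]
      refine Module.End.mapsTo_maxGenEigenspace_of_comm ?_ ρ
      exact ((Commute.refl X').sub_right ((Commute.one_right X').smul_right ρ)).smul_right c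
    have hmX2 : ∀ x ∈ U, (c • (X - ρ • 1)) x ∈ U := hmX
    have hmX'2 : ∀ x ∈ U, (c • (X' - ρ • 1)) x ∈ U := hmX'
    set n1 := (c • (X - ρ • 1)).restrict hmX2 with hn1
    set n2 := (c • (X' - ρ • 1)).restrict hmX'2 with hn2
    have hnil : ∀ (Y : V →ₗ[ℂ] V), (∀ v ∈ U, (((Y - ρ • 1)) ^ d) v = 0) →
        ∀ (hm : ∀ x ∈ U, (c • (Y - ρ • 1)) x ∈ U),
        ((c • (Y - ρ • 1)).restrict hm) ^ d = 0 := by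
      intro Y hY hm
      rw [Module.End.pow_restrict]
      ext v
      simp only [LinearMap.restrict_apply, LinearMap.zero_apply, ZeroMemClass.coe_zero]
      rw [smul_pow, LinearMap.smul_apply, hY v v.2, smul_zero]
    have hXd : ∀ v ∈ U, (((X - ρ • 1)) ^ d) v = 0 := by
      intro v hv
      rw [hU, Module.End.maxGenEigenspace_eq_genEigenspace_finrank,
        Module.End.mem_genEigenspace_nat, LinearMap.mem_ker] at hv
      rw [← hd] at hv; exact hv
    have hX'd : ∀ v ∈ U, (((X' - ρ • 1)) ^ d) v = 0 := by
      intro v hv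
      rw [hUeq, Module.End.maxGenEigenspace_eq_genEigenspace_finrank,
        Module.End.mem_genEigenspace_nat, LinearMap.mem_ker] at hv
      rw [← hd] at hv; exact hv
    have hn1d : n1 ^ d = 0 := hnil X hXd hmX2
    have hn2d : n2 ^ d = 0 := hnil X' hX'd hmX'2
    have hTeq : ∀ v ∈ U,
        (∑ k ∈ Finset.range d, ((k.factorial : ℂ))⁻¹ • (c • (X - ρ • 1)) ^ k) v
          = (∑ k ∈ Finset.range d, ((k.factorial : ℂ))⁻¹ • (c • (X' - ρ • 1)) ^ k) v := by
      intro v hv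
      have e1 := endExp_apply_maxGenEigenspace c X ρ v hv
      have e2 := endExp_apply_maxGenEigenspace c X' ρ v (hUeq ▸ hv)
      rw [hgX] at e1
      rw [hgX'] at e2
      have := e1.symm.trans e2
      rw [← hd] at this
      exact smul_right_injective V hμ0 this
    have hsumeq : ∑ k ∈ Finset.range d, ((k.factorial : ℂ))⁻¹ • n1 ^ k
        = ∑ k ∈ Finset.range d, ((k.factorial : ℂ))⁻¹ • n2 ^ k := by
      ext v
      have hcoe : ∀ (f : V →ₗ[ℂ] V) (hm : ∀ x ∈ U, f x ∈ U) (v : U),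
          (((∑ k ∈ Finset.range d, ((k.factorial : ℂ))⁻¹ • (f.restrict hm) ^ k) v : U) : V)
            = (∑ k ∈ Finset.range d, ((k.factorial : ℂ))⁻¹ • f ^ k) v := by
        intro f hm v
        rw [LinearMap.sum_apply, LinearMap.sum_apply, AddSubmonoid.coe_finset_sum]
        refine Finset.sum_congr rfl fun k _ => ?_
        rw [LinearMap.smul_apply, LinearMap.smul_apply, SetLike.val_smul,
          Module.End.pow_restrict, LinearMap.restrict_apply]
      rw [hn1, hn2]
      simp only [hcoe]
      exact hTeq v v.2
    have hn12 := nilpotent_expPoly_inj hn1d hn2d hsumeq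
    have happ : (c • (X - ρ • 1)) u = (c • (X' - ρ • 1)) u := by
      have := congrArg (fun f => ((f ⟨u, hu⟩ : U) : V)) hn12
      simpa only [hn1, hn2, LinearMap.restrict_apply] using this
    have : c • (X u - ρ • u) = c • (X' u - ρ • u) := by
      simpa only [LinearMap.smul_apply, LinearMap.sub_apply, LinearMap.smul_apply,
        Module.End.one_apply] using happ
    have h2 := smul_right_injective V hcne this
    have h3 := congrArg (fun t => t + ρ • u) h2
    simpa using h3
  -- conclude
  ext v
  have hvtop : v ∈ ⨆ ρ : ℂ, Module.End.maxGenEigenspace X ρ := by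
    rw [Module.End.iSup_maxGenEigenspace_eq_top]; trivial
  refine Submodule.iSup_induction _ (motive := fun v => X v = X' v) hvtop hagree ?_ ?_
  · simp
  · intro x y hx hy
    rw [map_add, map_add, hx, hy]
end
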